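/- arXiv:2103.12658 — 5 statements merged into one kernel-verified Lean document; each statement's English description precedes it below -/
import Mathlib

section
/- Let M₁ and M₂ be matroids on a common finite ground set Ê such that rk(M₁ ∨ M₂) = rk(M₁) + rk(M₂), where M̂ = M₁ ∨ M₂ is the matroid union, and suppose there is a basis B₂ of M₂ consisting entirely of loops of M₁. If D is a cocircuit of M₁, then D is also a cocircuit of M̂. -/
open Set Matroid
namespace NL
variable {γ : Type*}

/-- Rank of a set in a matroid: the max size of an independent subset. -/
noncomputable def rk (M : Matroid γ) (X : Set γ) : ℕ :=
  sSup {n | ∃ I, M.Indep I ∧ I ⊆ X ∧ I.ncard = n}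

/-- A cocircuit: a minimal set meeting every base. -/
def Cocircuit (M : Matroid γ) (D : Set γ) : Prop :=
  D ⊆ M.E ∧ (∀ B, M.IsBase B → (D ∩ B).Nonempty) ∧
    ∀ D' ⊂ D, ∃ B, M.IsBase B ∧ D' ∩ B = ∅

/-- A loop: an element contained in no independent set. -/
def MLoop (M : Matroid γ) (e : γ) : Prop := e ∈ M.E ∧ ¬ M.Indep {e}

/-- Parallel elements: distinct non-loops forming a dependent pair. -/
def MParallel (M : Matroid γ) (e f : γ) : Prop :=
  e ≠ f ∧ M.Indep {e} ∧ M.Indep {f} ∧ ¬ M.Indep {e, f}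

/-- Deletion of the set `X`. -/
noncomputable def mdelete (M : Matroid γ) (X : Set γ) : Matroid γ := M ↾ (M.E \ X)

/-- Contraction of the set `X`, defined by duality. -/
noncomputable def mcontract (M : Matroid γ) (X : Set γ) : Matroid γ := (M✶ ↾ (M✶.E \ X))✶

/-- `X` is a union of cocircuits of `M` (equivalently, the complement of a flat). -/
def UnionOfCocircuits (M : Matroid γ) (X : Set γ) : Prop :=
  ∃ S : Set (Set γ), (∀ D ∈ S, Cocircuit M D) ∧ X = ⋃₀ S

/-- The rank of `X` in the lattice of unions of cocircuits of `M` ordered by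
inclusion: the maximal length of a chain from `∅` to `X` in this lattice. -/
noncomputable def latticeRk (M : Matroid γ) (X : Set γ) : ℕ :=
  sSup {k | ∃ c : Fin (k+1) → Set γ, StrictMono c ∧ (∀ i, UnionOfCocircuits M (c i)) ∧
    c 0 = ∅ ∧ c (Fin.last k) = X}

/- Every base of `M₁ ∨ M₂` is `I₁ ∪ I₂` with `Iᵢ` independent in `Mᵢ`; when the rank of the union is
`rk M₁ + rk M₂`, counting forces `I₁` to be a base of `M₁`, so every base of the union contains a
base of `M₁`, which `D` meets. Conversely, a base `B₁` of `M₁` missing a proper subset `D'` of `D`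
is disjoint from the `M₁`-loops `B₂`, so `B₁ ∪ B₂` is a base of the union by counting, and it
misses `D'` because a cocircuit contains no loops. -/

end NL

namespace Matroid

open NL

variable {γ : Type*} {M : Matroid γ} {I B X : Set γ}

section RankFinite

variable [M.RankFinite]

lemma Indep.ncard_le_ncard_of_isBase (hI : M.Indep I) (hB : M.IsBase B) : I.ncard ≤ B.ncard := by
  obtain ⟨B', hB', hIB'⟩ := hI.exists_isBase_superset
  exact (ncard_le_ncard hIB' hB'.finite).trans (hB'.ncard_eq_ncard_of_isBase hB).le

lemma IsBase.rk_ground_eq_ncard (hB : M.IsBase B) : rk M M.E = B.ncard := by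
  have hbdd : BddAbove {n | ∃ I, M.Indep I ∧ I ⊆ M.E ∧ I.ncard = n} :=
    ⟨B.ncard, by rintro n ⟨I, hI, -, rfl⟩; exact hI.ncard_le_ncard_of_isBase hB⟩
  refine le_antisymm (csSup_le ⟨0, ∅, M.empty_indep, empty_subset _, ncard_empty γ⟩ ?_) ?_
  · rintro n ⟨I, hI, -, rfl⟩
    exact hI.ncard_le_ncard_of_isBase hB
  · exact le_csSup hbdd ⟨B, hB.indep, hB.subset_ground, rfl⟩

lemma Indep.ncard_le_rk_ground (hI : M.Indep I) : I.ncard ≤ rk M M.E := by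
  obtain ⟨B, hB⟩ := M.exists_isBase
  exact hB.rk_ground_eq_ncard ▸ hI.ncard_le_ncard_of_isBase hB

lemma Indep.isBase_of_rk_ground_le_ncard (hI : M.Indep I) (h : rk M M.E ≤ I.ncard) :
    M.IsBase I := by
  obtain ⟨B, hB, hIB⟩ := hI.exists_isBase_superset
  rwa [eq_of_subset_of_ncard_le hIB (hB.rk_ground_eq_ncard ▸ h) hB.finite]

end RankFinite

lemma Indep.disjoint_of_forall_mloop (hI : M.Indep I) (hX : ∀ e ∈ X, MLoop M e) :
    Disjoint I X :=
  disjoint_right.mpr fun e he heI ↦ (hX e he).2 (hI.subset (singleton_subset_iff.mpr heI))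

end Matroid

namespace NL

variable {γ : Type*}

lemma Cocircuit.not_mloop {M : Matroid γ} {D : Set γ} {e : γ} (hD : Cocircuit M D) (he : e ∈ D) :
    ¬ MLoop M e := by
  intro hloop
  obtain ⟨-, hD_meets, hD_min⟩ := hD
  obtain ⟨B, hB, hB_disj⟩ := hD_min (D \ {e}) (sdiff_singleton_ssubset.mpr he)
  obtain ⟨f, hfD, hfB⟩ := hD_meets B hB
  have hfe : f = e := by
    by_contra hne
    exact (eq_empty_iff_forall_notMem.mp hB_disj) f ⟨⟨hfD, hne⟩, hfB⟩
  exact hloop.2 (hB.indep.subset (singleton_subset_iff.mpr (hfe ▸ hfB)))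

def IsUnionOf (M M₁ M₂ : Matroid γ) : Prop :=
  ∀ I, M.Indep I ↔ ∃ I₁ I₂, M₁.Indep I₁ ∧ M₂.Indep I₂ ∧ I = I₁ ∪ I₂

namespace IsUnionOf

variable {M M₁ M₂ : Matroid γ} {I B B₁ B₂ : Set γ}

lemma indep_of_left (hU : IsUnionOf M M₁ M₂) (hI : M₁.Indep I) : M.Indep I :=
  (hU I).mpr ⟨I, ∅, hI, M₂.empty_indep, (union_empty I).symm⟩

lemma indep_of_right (hU : IsUnionOf M M₁ M₂) (hI : M₂.Indep I) : M.Indep I :=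
  (hU I).mpr ⟨∅, I, M₁.empty_indep, hI, (empty_union I).symm⟩

lemma rankFinite_left [M.RankFinite] (hU : IsUnionOf M M₁ M₂) : M₁.RankFinite := by
  obtain ⟨B, hB⟩ := M₁.exists_isBase
  exact hB.rankFinite_of_finite (hU.indep_of_left hB.indep).finite

lemma rankFinite_right [M.RankFinite] (hU : IsUnionOf M M₁ M₂) : M₂.RankFinite := by
  obtain ⟨B, hB⟩ := M₂.exists_isBase
  exact hB.rankFinite_of_finite (hU.indep_of_right hB.indep).finite

lemma exists_isBase_left_subset [M.RankFinite] (hU : IsUnionOf M M₁ M₂)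
    (hrk : rk M M.E = rk M₁ M₁.E + rk M₂ M₂.E) (hB : M.IsBase B) :
    ∃ B₁ ⊆ B, M₁.IsBase B₁ := by
  have := hU.rankFinite_left
  have := hU.rankFinite_right
  obtain ⟨I₁, I₂, hI₁, hI₂, rfl⟩ := (hU B).mp hB.indep
  have h₁ := hI₁.ncard_le_rk_ground
  have h₂ := hI₂.ncard_le_rk_ground
  have hunion := ncard_union_le I₁ I₂
  have hB_card := hB.rk_ground_eq_ncard
  exact ⟨I₁, subset_union_left, hI₁.isBase_of_rk_ground_le_ncard (by omega)⟩

lemma union_isBase [M.RankFinite] (hU : IsUnionOf M M₁ M₂)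
    (hrk : rk M M.E = rk M₁ M₁.E + rk M₂ M₂.E) (hB₁ : M₁.IsBase B₁) (hB₂ : M₂.IsBase B₂)
    (hdisj : Disjoint B₁ B₂) : M.IsBase (B₁ ∪ B₂) := by
  have := hU.rankFinite_left
  have := hU.rankFinite_right
  refine ((hU _).mpr ⟨B₁, B₂, hB₁.indep, hB₂.indep, rfl⟩).isBase_of_rk_ground_le_ncard ?_
  rw [ncard_union_eq hdisj hB₁.finite hB₂.finite, hrk, hB₁.rk_ground_eq_ncard,
    hB₂.rk_ground_eq_ncard]

end IsUnionOf

theorem cocircuit_of_union_general (M₁ M₂ Mhat : Matroid γ) (hfin : Mhat.E.Finite)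
    (hEh : Mhat.E = M₁.E)
    (hU : ∀ I, Mhat.Indep I ↔ ∃ I₁ I₂, M₁.Indep I₁ ∧ M₂.Indep I₂ ∧ I = I₁ ∪ I₂)
    (hrk : rk Mhat Mhat.E = rk M₁ M₁.E + rk M₂ M₂.E)
    (hB2 : ∃ B₂, M₂.IsBase B₂ ∧ ∀ e ∈ B₂, MLoop M₁ e)
    (D : Set γ) (hD : Cocircuit M₁ D) :
    Cocircuit Mhat D := by
  have : Mhat.Finite := ⟨hfin⟩
  have hU : IsUnionOf Mhat M₁ M₂ := hU
  have ⟨hD_sub, hD_meets, hD_min⟩ := hD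
  obtain ⟨B₂, hB₂, hB₂_loops⟩ := hB2
  refine ⟨hEh ▸ hD_sub, fun B hB ↦ ?_, fun D' hD' ↦ ?_⟩
  · obtain ⟨B₁, hB₁B, hB₁⟩ := hU.exists_isBase_left_subset hrk hB
    exact (hD_meets B₁ hB₁).mono (inter_subset_inter_right D hB₁B)
  · obtain ⟨B₁, hB₁, hD'B₁⟩ := hD_min D' hD'
    refine ⟨B₁ ∪ B₂,
      hU.union_isBase hrk hB₁ hB₂ (hB₁.indep.disjoint_of_forall_mloop hB₂_loops), ?_⟩
    rw [inter_union_distrib_left, hD'B₁, empty_union, eq_empty_iff_forall_notMem]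
    exact fun e ⟨heD', heB₂⟩ ↦ hD.not_mloop (hD'.subset heD') (hB₂_loops e heB₂)

/-- if `M̂ = M₁ ∨ M₂` with `rk(M̂) = rk(M₁) + rk(M₂)` and some base of
`M₂` consists of loops of `M₁`, then every cocircuit of `M₁` is a cocircuit of `M̂`. -/
theorem cocircuit_of_union (M₁ M₂ Mhat : Matroid γ) (hfin : Mhat.E.Finite)
    (hE12 : M₁.E = M₂.E) (hEh : Mhat.E = M₁.E)
    (hU : ∀ I, Mhat.Indep I ↔ ∃ I₁ I₂, M₁.Indep I₁ ∧ M₂.Indep I₂ ∧ I = I₁ ∪ I₂)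
    (hrk : rk Mhat Mhat.E = rk M₁ M₁.E + rk M₂ M₂.E)
    (hB2 : ∃ B₂, M₂.IsBase B₂ ∧ ∀ e ∈ B₂, MLoop M₁ e)
    (D : Set γ) (hD : Cocircuit M₁ D) :
    Cocircuit Mhat D :=
  cocircuit_of_union_general M₁ M₂ Mhat hfin hEh hU hrk hB2 D hD

end NL
end

section
/- Let M be a matroid on E = {1,…,n} of rank r with basis {1,…,r}, and let M̂ be the matroid union M₁ ∨ M₂ on Ê = E ∪ A ∪ B constructed as follows: M₁ extends M by elements A = {n+1,…,n+r} with n+i parallel to i for 1 ≤ i ≤ r, and all of B = {n+r+1,…,2n} ∪ {n+i : r+1 ≤ i ≤ n} appropriate loops; M₂ extends the dual M* by elements of B parallel to the corresponding elements of E \ {1,…,r} and elements of A as loops. Then M̂ \ A / B = M and M̂ / A \ B = M*. -/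
/-!
In `M̂ ＼ A` the elements of `B` are loops of `M₁`, while in `M₂` they are parallel to the basis
`{r+1,…,n}` of `M✶`, so they form an independent set of `M₂` spanning `E`. Hence in any
decomposition `I ∪ B = I₁ ∪ I₂` of an independent set of `M̂` with `I ⊆ E`, all of `B` lies in
`I₂` and no element of `I` can join it there: `I ∪ B` is independent in `M̂` iff `I` is
independent in `M₁`, i.e. in `M`. This is `M̂ ＼ A ／ B = M`. Exchanging the roles of `(M₁, A)`
and `(M₂, B)` gives `M̂ ＼ B ／ A = M✶`, and deleting `B` commutes with contracting `A`.
-/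

open Set Matroid
namespace NL
variable {γ : Type*}

lemma mdelete_eq_delete (M : Matroid γ) (X : Set γ) : mdelete M X = M ＼ X := rfl

lemma mcontract_eq_contract (M : Matroid γ) (X : Set γ) : mcontract M X = M ／ X := rfl

lemma delete_contract_eq_of_indep_union_iff {N M : Matroid γ} {C D : Set γ}
    (hE : (N.E \ D) \ C = M.E) (hC : N.Indep C) (hCD : Disjoint C D)
    (h : ∀ I ⊆ M.E, N.Indep (I ∪ C) ↔ M.Indep I) : N ＼ D ／ C = M := by
  have hC' : (N ＼ D).Indep C := delete_indep_iff.2 ⟨hC, hCD⟩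
  refine ext_indep hE fun I hI => ?_
  have hIC : Disjoint I C := disjoint_of_subset_left hI disjoint_sdiff_left
  have hID : Disjoint I D :=
    disjoint_of_subset_left (hI.trans sdiff_subset) disjoint_sdiff_left
  rw [hC'.contract_indep_iff, delete_indep_iff, h I (hE ▸ hI)]
  simp [hIC, hID, hCD]

lemma MParallel.mem_closure_singleton {N : Matroid γ} {e f : γ} (h : MParallel N e f) :
    e ∈ N.closure {f} := by
  obtain ⟨hne, he, hf, hef⟩ := h
  exact (hf.mem_closure_iff_of_notMem hne).2
    ⟨hef, insert_subset (he.subset_ground rfl) hf.subset_ground⟩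

lemma subset_closure_image_of_mparallel {N : Matroid γ} {T : Set γ} {f : γ → γ}
    (hpar : ∀ t ∈ T, MParallel N t (f t)) : T ⊆ N.closure (f '' T) := fun t ht =>
  N.closure_subset_closure (singleton_subset_iff.2 (mem_image_of_mem f ht))
    (hpar t ht).mem_closure_singleton

lemma indep_of_subset_closure_of_encard_le {N : Matroid γ} {I X : Set γ} (hI : N.Indep I)
    (hIX : I ⊆ N.closure X) (hX : X.Finite) (hcard : X.encard ≤ I.encard) : N.Indep X := by
  rw [indep_iff_eRk_eq_encard_of_finite hX]
  refine (N.eRk_le_encard X).antisymm (hcard.trans ?_)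
  simpa only [eRk_closure_eq] using hI.encard_le_eRk_of_subset hIX

lemma indep_image_of_mparallel {N : Matroid γ} {T : Set γ} {f : γ → γ} (hT : N.Indep T)
    (hfin : T.Finite) (hpar : ∀ t ∈ T, MParallel N t (f t)) : N.Indep (f '' T) :=
  indep_of_subset_closure_of_encard_le hT (subset_closure_image_of_mparallel hpar)
    (hfin.image f) (encard_image_le f T)

def IsUnion (N N₁ N₂ : Matroid γ) : Prop :=
  ∀ I, N.Indep I ↔ ∃ I₁ I₂, N₁.Indep I₁ ∧ N₂.Indep I₂ ∧ I = I₁ ∪ I₂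

lemma IsUnion.symm {N N₁ N₂ : Matroid γ} (h : IsUnion N N₁ N₂) : IsUnion N N₂ N₁ := fun I =>
  (h I).trans ⟨fun ⟨I₁, I₂, h₁, h₂, hI⟩ => ⟨I₂, I₁, h₂, h₁, hI.trans (union_comm _ _)⟩,
    fun ⟨I₂, I₁, h₂, h₁, hI⟩ => ⟨I₁, I₂, h₁, h₂, hI.trans (union_comm _ _)⟩⟩

lemma IsUnion.indep_union_iff {N N₁ N₂ : Matroid γ} (h : IsUnion N N₁ N₂) {I L : Set γ}
    (hloop : ∀ x ∈ L, ¬ N₁.Indep {x}) (hL : N₂.Indep L) (hspan : I ∩ N₂.E ⊆ N₂.closure L)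
    (hIL : Disjoint I L) : N.Indep (I ∪ L) ↔ N₁.Indep I := by
  refine ⟨fun hIL' => ?_, fun hI => (h _).2 ⟨I, L, hI, hL, rfl⟩⟩
  obtain ⟨I₁, I₂, h₁, h₂, hI₁₂⟩ := (h _).1 hIL'
  have hLI₂ : L ⊆ I₂ := fun x hx =>
    (hI₁₂ ▸ mem_union_right I hx : x ∈ I₁ ∪ I₂).resolve_left
      fun hx₁ => hloop x hx (h₁.subset (singleton_subset_iff.2 hx₁))
  refine h₁.subset fun x hx => by_contra fun hx₁ => ?_
  have hx₂ : x ∈ I₂ := (hI₁₂ ▸ mem_union_left L hx : x ∈ I₁ ∪ I₂).resolve_left hx₁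
  have hxL := (hL.insert_indep_iff_of_notMem (hIL.notMem_of_mem_left hx)).1
    (h₂.subset (insert_subset hx₂ hLI₂))
  exact hxL.2 (hspan ⟨hx, hxL.1⟩)

lemma IsUnion.delete_contract_image_eq_restrict {N N₁ N₂ : Matroid γ} (hN : IsUnion N N₁ N₂)
    {E₀ T D : Set γ} {f : γ → γ} (hT : (N₂ ↾ E₀).IsBase T) (hTfin : T.Finite)
    (hpar : ∀ t ∈ T, MParallel N₂ t (f t)) (hloop : ∀ t ∈ T, MLoop N₁ (f t))
    (hE : (N.E \ D) \ f '' T = E₀) (hD : Disjoint (f '' T) D) :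
    N ＼ D ／ f '' T = N₁ ↾ E₀ := by
  have hL : N₂.Indep (f '' T) := indep_image_of_mparallel hT.indep.of_restrict hTfin hpar
  have hspan : E₀ ∩ N₂.E ⊆ N₂.closure (f '' T) :=
    (isBasis'_iff_isBasis_inter_ground.1 (isBase_restrict_iff'.1 hT)).subset_closure.trans
      (N₂.closure_subset_closure_of_subset_closure (subset_closure_image_of_mparallel hpar))
  refine delete_contract_eq_of_indep_union_iff hE
    ((hN _).2 ⟨∅, f '' T, N₁.empty_indep, hL, (empty_union _).symm⟩) hD fun I hI => ?_
  rw [hN.indep_union_iff (forall_mem_image.2 fun t ht => (hloop t ht).2) hL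
    ((inter_subset_inter_left _ hI).trans hspan)
    (disjoint_of_subset_left (hE ▸ hI) disjoint_sdiff_left), restrict_indep_iff]
  exact (and_iff_left hI).symm

theorem bz_complementary_minors_general
    (n r : ℕ) (M M₁ M₂ Mhat : Matroid ℕ)
    (hME : M.E = Set.Icc 1 n) (hMB : M.IsBase (Set.Icc 1 r))
    (hres1 : M₁ ↾ (Set.Icc 1 n) = M)
    (hpar1 : ∀ i ∈ Set.Icc 1 r, MParallel M₁ i (n+i))
    (hloop1 : ∀ i ∈ Set.Icc (r+1) n, MLoop M₁ (n+i))
    (hres2 : M₂ ↾ (Set.Icc 1 n) = M✶)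
    (hpar2 : ∀ i ∈ Set.Icc (r+1) n, MParallel M₂ i (n+i))
    (hloop2 : ∀ i ∈ Set.Icc 1 r, MLoop M₂ (n+i))
    (hEh : Mhat.E = Set.Icc 1 (2*n))
    (hU : ∀ I, Mhat.Indep I ↔ ∃ I₁ I₂, M₁.Indep I₁ ∧ M₂.Indep I₂ ∧ I = I₁ ∪ I₂)
    :
    mcontract (mdelete Mhat (Set.Icc (n+1) (n+r))) (Set.Icc (n+r+1) (2*n)) = M ∧
    mdelete (mcontract Mhat (Set.Icc (n+1) (n+r))) (Set.Icc (n+r+1) (2*n)) = M✶ := by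
  have hUnion : IsUnion Mhat M₁ M₂ := hU
  have hA : (n + ·) '' Icc 1 r = Icc (n+1) (n+r) := image_const_add_Icc n 1 r
  have hB : (n + ·) '' Icc (r+1) n = Icc (n+r+1) (2*n) := by
    rw [image_const_add_Icc, two_mul, add_assoc]
  have hM₂base : (M₂ ↾ Icc 1 n).IsBase (Icc (r+1) n) := by
    have h := hMB.compl_isBase_dual
    rwa [hME, show Icc 1 n \ Icc 1 r = Icc (r+1) n by ext; simp only [mem_sdiff, mem_Icc]; omega,
      ← hres2] at h
  have hAB : Disjoint (Icc (n+1) (n+r)) (Icc (n+r+1) (2*n)) :=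
    disjoint_left.2 fun x hxA hxB => by simp only [mem_Icc] at hxA hxB; omega
  have hdel := hUnion.delete_contract_image_eq_restrict (D := Icc (n+1) (n+r)) hM₂base
    (finite_Icc _ _) hpar2 hloop1 (by rw [hB, hEh]; ext; simp only [mem_sdiff, mem_Icc]; omega)
    (hB ▸ hAB.symm)
  have hcon := hUnion.symm.delete_contract_image_eq_restrict (D := Icc (n+r+1) (2*n))
    (hres1 ▸ hMB) (finite_Icc _ _) hpar1 hloop2
    (by rw [hA, hEh]; ext; simp only [mem_sdiff, mem_Icc]; omega) (hA ▸ hAB)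
  rw [hB, hres1] at hdel
  rw [hA, hres2] at hcon
  refine ⟨hdel, ?_⟩
  rwa [mcontract_eq_contract, mdelete_eq_delete, contract_delete_comm _ hAB]

/-- in the Brylawski–Ziegler construction, `M̂ \ A / B = M` and
`M̂ / A \ B = M✶`, where `A = {n+1,…,n+r}` and `B = {n+r+1,…,2n}`. -/
theorem bz_complementary_minors
    (n r : ℕ) (hrn : r ≤ n) (M M₁ M₂ Mhat : Matroid ℕ)
    (hME : M.E = Set.Icc 1 n) (hMB : M.IsBase (Set.Icc 1 r))
    (hE1 : M₁.E = Set.Icc 1 (2*n)) (hres1 : M₁ ↾ (Set.Icc 1 n) = M)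
    (hpar1 : ∀ i ∈ Set.Icc 1 r, MParallel M₁ i (n+i))
    (hloop1 : ∀ i ∈ Set.Icc (r+1) n, MLoop M₁ (n+i))
    (hE2 : M₂.E = Set.Icc 1 (2*n)) (hres2 : M₂ ↾ (Set.Icc 1 n) = M✶)
    (hpar2 : ∀ i ∈ Set.Icc (r+1) n, MParallel M₂ i (n+i))
    (hloop2 : ∀ i ∈ Set.Icc 1 r, MLoop M₂ (n+i))
    (hEh : Mhat.E = Set.Icc 1 (2*n))
    (hU : ∀ I, Mhat.Indep I ↔ ∃ I₁ I₂, M₁.Indep I₁ ∧ M₂.Indep I₂ ∧ I = I₁ ∪ I₂)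
    :
    mcontract (mdelete Mhat (Set.Icc (n+1) (n+r))) (Set.Icc (n+r+1) (2*n)) = M ∧
    mdelete (mcontract Mhat (Set.Icc (n+1) (n+r))) (Set.Icc (n+r+1) (2*n)) = M✶ :=
  bz_complementary_minors_general n r M M₁ M₂ Mhat hME hMB hres1 hpar1 hloop1 hres2 hpar2 hloop2 hEh
    hU

end NL
end

section
/- With the construction M̂ = M₁ ∨ M₂ as above (where M has rank r on an n-element set E), the matroid M̂ has rank n. -/
/-!
The added elements `n + i` are parallel copies of elements of `E` or loops, so `E` spans both
`M₁` and `M₂`. Hence the base `B = {1, …, r}` of `M` is a base of `M₁` and its complement `E \ B`,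
a base of `M*`, is a base of `M₂`. An independent set of `M̂` is a union of independent sets of
`M₁` and `M₂`, so it has at most `|B| + |E \ B| = n` elements, and `E = B ∪ (E \ B)` attains this.
-/

open Set Matroid
namespace NL
variable {γ : Type*}

section

variable {N : Matroid γ} {X B I : Set γ} {e f : γ}

lemma MParallel.mem_closure (h : MParallel N e f) : f ∈ N.closure {e} := by
  obtain ⟨hef, he, hf, hdep⟩ := h
  rw [he.mem_closure_iff_of_notMem (Ne.symm hef), dep_iff, pair_comm]
  exact ⟨hdep, pair_subset (he.subset_ground rfl) (hf.subset_ground rfl)⟩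

lemma MLoop.mem_closure (h : MLoop N e) (X : Set γ) : e ∈ N.closure X :=
  ((not_isNonloop_iff h.1).1 (indep_singleton.not.1 h.2)).mem_closure X

lemma spanning_of_forall_mLoop_or_mParallel (hX : X ⊆ N.E)
    (h : ∀ e ∈ N.E \ X, MLoop N e ∨ ∃ f ∈ X, MParallel N f e) : N.Spanning X := by
  rw [spanning_iff_ground_subset_closure hX]
  intro e he
  by_cases heX : e ∈ X
  · exact N.mem_closure_of_mem heX hX
  obtain hloop | ⟨f, hfX, hpar⟩ := h e ⟨he, heX⟩
  · exact hloop.mem_closure X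
  · exact N.closure_subset_closure (singleton_subset_iff.2 hfX) hpar.mem_closure

lemma _root_.Matroid.Indep.ncard_le_ncard_of_isBase_s5 (hI : N.Indep I) (hB : N.IsBase B)
    (hBfin : B.Finite) : I.ncard ≤ B.ncard := by
  obtain ⟨B', hB', hIB'⟩ := hI.exists_isBase_superset
  calc I.ncard ≤ B'.ncard := ncard_le_ncard hIB' (hB.finite_of_finite hBfin hB')
    _ = B.ncard := hB'.ncard_eq_ncard_of_isBase hB

lemma rk_eq_of_indep_of_forall_ncard_le (hI : N.Indep I) (hIX : I ⊆ X)
    (hle : ∀ J, N.Indep J → J ⊆ X → J.ncard ≤ I.ncard) : rk N X = I.ncard :=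
  IsGreatest.csSup_eq ⟨⟨I, hI, hIX, rfl⟩, by rintro _ ⟨J, hJ, hJX, rfl⟩; exact hle J hJ hJX⟩

end

lemma spanning_Icc_of_forall_mParallel_or_mLoop {n : ℕ} {N : Matroid ℕ}
    (hE : N.E = Icc 1 (2 * n)) (h : ∀ i ∈ Icc 1 n, MParallel N i (n + i) ∨ MLoop N (n + i)) :
    N.Spanning (Icc 1 n) := by
  refine spanning_of_forall_mLoop_or_mParallel (hE ▸ Icc_subset_Icc_right (by omega)) ?_
  rintro e ⟨he, heX⟩
  rw [hE, mem_Icc] at he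
  rw [mem_Icc] at heX
  obtain ⟨i, hi, rfl⟩ : ∃ i ∈ Icc 1 n, e = n + i := ⟨e - n, ⟨by omega, by omega⟩, by omega⟩
  exact (h i hi).symm.imp_right fun hpar => ⟨i, hi, hpar⟩

theorem bz_union_rank_general
    (n r : ℕ) (M M₁ M₂ Mhat : Matroid ℕ)
    (hME : M.E = Set.Icc 1 n) (hMB : M.IsBase (Set.Icc 1 r))
    (hE1 : M₁.E = Set.Icc 1 (2*n)) (hres1 : M₁ ↾ (Set.Icc 1 n) = M)
    (hpar1 : ∀ i ∈ Set.Icc 1 r, MParallel M₁ i (n+i))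
    (hloop1 : ∀ i ∈ Set.Icc (r+1) n, MLoop M₁ (n+i))
    (hE2 : M₂.E = Set.Icc 1 (2*n)) (hres2 : M₂ ↾ (Set.Icc 1 n) = M✶)
    (hpar2 : ∀ i ∈ Set.Icc (r+1) n, MParallel M₂ i (n+i))
    (hloop2 : ∀ i ∈ Set.Icc 1 r, MLoop M₂ (n+i))
    (hU : ∀ I, Mhat.Indep I ↔ ∃ I₁ I₂, M₁.Indep I₁ ∧ M₂.Indep I₂ ∧ I = I₁ ∪ I₂)
    :
    rk Mhat Mhat.E = n := by
  have hspan₁ : M₁.Spanning (Icc 1 n) := spanning_Icc_of_forall_mParallel_or_mLoop hE1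
    fun i hi => (le_or_gt i r).imp (fun h => hpar1 i ⟨hi.1, h⟩) fun h => hloop1 i ⟨h, hi.2⟩
  have hspan₂ : M₂.Spanning (Icc 1 n) := spanning_Icc_of_forall_mParallel_or_mLoop hE2
    fun i hi => (le_or_gt i r).symm.imp (fun h => hpar2 i ⟨h, hi.2⟩) fun h => hloop2 i ⟨hi.1, h⟩
  have hB₁ : M₁.IsBase (Icc 1 r) := (hspan₁.isBase_restrict_iff.1 (hres1 ▸ hMB)).1
  have hB₂ : M₂.IsBase (Icc 1 n \ Icc 1 r) :=
    (hspan₂.isBase_restrict_iff.1 (hres2 ▸ hME ▸ hMB.compl_isBase_dual)).1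
  have hunion : Icc 1 r ∪ (Icc 1 n \ Icc 1 r) = Icc 1 n :=
    union_sdiff_cancel (hME ▸ hMB.subset_ground)
  have hindep : Mhat.Indep (Icc 1 n) := (hU _).2 ⟨_, _, hB₁.indep, hB₂.indep, hunion.symm⟩
  have hrk := rk_eq_of_indep_of_forall_ncard_le hindep hindep.subset_ground fun J hJ _ => by
    obtain ⟨I₁, I₂, hI₁, hI₂, rfl⟩ := (hU J).1 hJ
    calc (I₁ ∪ I₂).ncard ≤ I₁.ncard + I₂.ncard := ncard_union_le _ _
      _ ≤ (Icc 1 r).ncard + (Icc 1 n \ Icc 1 r).ncard :=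
        add_le_add (hI₁.ncard_le_ncard_of_isBase_s5 hB₁ (finite_Icc _ _))
          (hI₂.ncard_le_ncard_of_isBase_s5 hB₂ (finite_Icc _ _).sdiff)
      _ = (Icc 1 n).ncard := by rw [← ncard_union_eq disjoint_sdiff_right, hunion]
  simpa using hrk

/-- the Brylawski–Ziegler union `M̂ = M₁ ∨ M₂` has rank `n`. -/
theorem bz_union_rank
    (n r : ℕ) (hrn : r ≤ n) (M M₁ M₂ Mhat : Matroid ℕ)
    (hME : M.E = Set.Icc 1 n) (hMB : M.IsBase (Set.Icc 1 r))
    (hE1 : M₁.E = Set.Icc 1 (2*n)) (hres1 : M₁ ↾ (Set.Icc 1 n) = M)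
    (hpar1 : ∀ i ∈ Set.Icc 1 r, MParallel M₁ i (n+i))
    (hloop1 : ∀ i ∈ Set.Icc (r+1) n, MLoop M₁ (n+i))
    (hE2 : M₂.E = Set.Icc 1 (2*n)) (hres2 : M₂ ↾ (Set.Icc 1 n) = M✶)
    (hpar2 : ∀ i ∈ Set.Icc (r+1) n, MParallel M₂ i (n+i))
    (hloop2 : ∀ i ∈ Set.Icc 1 r, MLoop M₂ (n+i))
    (hEh : Mhat.E = Set.Icc 1 (2*n))
    (hU : ∀ I, Mhat.Indep I ↔ ∃ I₁ I₂, M₁.Indep I₁ ∧ M₂.Indep I₂ ∧ I = I₁ ∪ I₂)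
    :
    rk Mhat Mhat.E = n :=
  bz_union_rank_general n r M M₁ M₂ Mhat hME hMB hE1 hres1 hpar1 hloop1 hE2 hres2 hpar2 hloop2 hU

end NL
end

section
/- Let D = (V, A) be a digraph and let Q be the poset (ordered by inclusion) of arc sets B ⊆ A such that the subdigraph D[B] is totally cyclic (every arc of B lies on a directed cycle of D[B]), with Möbius function μ_Q. Define the NL-coflow polynomial ψ(x) = Σ_{B ∈ Q} μ_Q(∅, B) · x^{rk(A/B)}, where rk(A/B) is the rank of the graphic matroid of D after contracting B. Then ψ evaluated at a positive integer k, times k^{c}, where c is the number of connected components of D, is a nonnegative integer for k large (in particular ψ(x) is a polynomial in x with integer coefficients). -/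
/-!
Counting isolated vertices as components, `rk(A) + c(A) = |V|` for every arc set, so
`ψ(k) k^{c(A)} = Σ_{B ∈ Q} μ_Q(∅, B) k^{c(B)}`, and `k^{c(B)}` counts the colourings
`f : V → [k]` that are constant along every arc of `B`. Exchanging the sums,
`ψ(k) k^{c(A)} = Σ_f Σ_{B ∈ Q, B ⊆ A_f} μ_Q(∅, B)`, where `A_f` is the set of arcs
monochromatic under `f`. Totally cyclic arc sets are closed under union, so the totally cyclic
subsets of `A_f` form an interval `[∅, T_f]` of `Q`, and the inner sum is `1` if `T_f = ∅` and
`0` otherwise. Hence the whole sum is nonnegative, for every `k`.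
-/

open Finset
namespace NL
variable {γ : Type*} [DecidableEq γ]

-- The Möbius function `μ(∅, B)` of the subposet of `Finset γ` selected by `P`
-- (assumed to contain `∅` as minimum), ordered by inclusion.
open Classical in
noncomputable def fmu (P : Finset γ → Prop) : Finset γ → ℤ := fun B =>
  if B = ∅ then 1
  else - ∑ C ∈ (B.powerset.filter (fun C => C ≠ B ∧ P C)).attach, fmu P C.1
termination_by B => B.card
decreasing_by
  have hC := C.2
  rw [Finset.mem_filter, Finset.mem_powerset] at hC
  exact Finset.card_lt_card (lt_of_le_of_ne hC.1 hC.2.1)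

/-- The lattice rank of `X` in the subposet of `Finset γ` selected by `P`:
the maximal length of a chain from `∅` to `X`. -/
noncomputable def fLatRk (P : Finset γ → Prop) (X : Finset γ) : ℕ :=
  sSup {k | ∃ c : Fin (k+1) → Finset γ, StrictMono c ∧ (∀ i, P (c i)) ∧
    c 0 = ∅ ∧ c (Fin.last k) = X}

variable {V : Type*}

/-- Reachability by a directed path using only arcs in `B`. -/
def Reaches (B : Set (V × V)) (u v : V) : Prop :=
  Relation.ReflTransGen (fun x y => (x, y) ∈ B) u v

/-- An arc set is totally cyclic if every arc lies on a directed cycle within it. -/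
def TotCyc (B : Set (V × V)) : Prop := ∀ a ∈ B, Reaches B a.2 a.1

/-- Connectivity in the underlying undirected graph of the arc set `B`. -/
def Conn (B : Set (V × V)) (u v : V) : Prop :=
  Relation.ReflTransGen (fun x y => (x, y) ∈ B ∨ (y, x) ∈ B) u v

/-- The vertices incident with an arc of `B`. -/
def verts (B : Set (V × V)) : Set V := {v | ∃ a ∈ B, a.1 = v ∨ a.2 = v}

/-- The number of connected components of the subgraph spanned by the arc set `B`. -/
noncomputable def ncomps (B : Set (V × V)) : ℕ :=
  {S : Set V | ∃ v ∈ verts B, S = {u | Conn B v u}}.ncard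

/-- The rank `|V(B)| - c(B)` of an arc set in the graphic matroid. -/
noncomputable def rkArc (B : Set (V × V)) : ℕ := (verts B).ncard - ncomps B

theorem fmu_empty (P : Finset γ → Prop) : fmu P ∅ = 1 := by
  rw [fmu, if_pos rfl]

theorem sum_fmu_powerset_filter_eq_zero {P : Finset γ → Prop} [DecidablePred P] {B : Finset γ}
    (hB : B ≠ ∅) (hPB : P B) : ∑ C ∈ B.powerset.filter P, fmu P C = 0 := by
  have hrec : fmu P B = -∑ C ∈ (B.powerset.filter P).erase B, fmu P C := by
    rw [fmu, if_neg hB, sum_attach]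
    congr 1
    refine sum_congr ?_ fun _ _ => rfl
    ext C
    simp only [mem_filter, mem_erase]
    tauto
  rw [← add_sum_erase _ _ (mem_filter.2 ⟨mem_powerset_self B, hPB⟩), hrec, neg_add_cancel]

/-- The members of a union-closed family below `M` form an interval `[∅, T]`, so the Möbius sum
over them is `1` or `0`. -/
theorem sum_fmu_powerset_filter_nonneg {P : Finset γ → Prop} [DecidablePred P] (h0 : P ∅)
    (hunion : ∀ B, P B → ∀ C, P C → P (B ∪ C)) (M : Finset γ) :
    0 ≤ ∑ B ∈ M.powerset.filter P, fmu P B := by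
  set T := (M.powerset.filter P).sup id
  have hT : P T := sup_induction h0 hunion fun B hB => (mem_filter.1 hB).2
  have hTM : T ⊆ M := Finset.sup_le fun B hB => mem_powerset.1 (mem_filter.1 hB).1
  have hinterval : M.powerset.filter P = T.powerset.filter P := by
    ext B
    simp only [mem_filter, mem_powerset]
    exact ⟨fun h => ⟨le_sup (f := id) (mem_filter.2 ⟨mem_powerset.2 h.1, h.2⟩), h.2⟩,
      fun h => ⟨h.1.trans hTM, h.2⟩⟩
  rw [hinterval]
  by_cases hT0 : T = ∅
  · rw [hT0, powerset_empty, filter_singleton, if_pos h0, sum_singleton, fmu_empty]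
    exact zero_le_one
  · rw [sum_fmu_powerset_filter_eq_zero hT0 hT]

theorem filter_forall_mem_powerset_filter {α : Type*} (M : Finset α) (P : Finset α → Prop)
    [DecidablePred P] (q : α → Prop) [DecidablePred q]
    [DecidablePred fun B : Finset α => ∀ a ∈ B, q a] :
    (M.powerset.filter P).filter (fun B => ∀ a ∈ B, q a) = (M.filter q).powerset.filter P := by
  ext B
  simp only [mem_filter, mem_powerset, subset_iff]
  exact ⟨fun ⟨⟨hBM, hP⟩, hq⟩ => ⟨fun a ha => ⟨hBM ha, hq a ha⟩, hP⟩,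
    fun ⟨hB, hP⟩ => ⟨⟨fun a ha => (hB ha).1, hP⟩, fun a ha => (hB ha).2⟩⟩

theorem Reaches.mono {B C : Set (V × V)} (h : B ⊆ C) {u v : V} (huv : Reaches B u v) :
    Reaches C u v :=
  Relation.ReflTransGen.mono (fun _ _ hxy => h hxy) _ _ huv

theorem totCyc_empty : TotCyc (∅ : Set (V × V)) := fun _ h => h.elim

theorem TotCyc.union {B C : Set (V × V)} (hB : TotCyc B) (hC : TotCyc C) : TotCyc (B ∪ C) := by
  rintro a (ha | ha)
  · exact (hB a ha).mono Set.subset_union_left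
  · exact (hC a ha).mono Set.subset_union_right

theorem Conn.mono {X Y : Set (V × V)} (h : X ⊆ Y) {u v : V} (huv : Conn X u v) : Conn Y u v :=
  Relation.ReflTransGen.mono (r := fun x y => (x, y) ∈ X ∨ (y, x) ∈ X)
    (fun _ _ hxy => hxy.imp (fun h' => h h') fun h' => h h') _ _ huv

theorem conn_equivalence (X : Set (V × V)) : Equivalence (Conn X) :=
  have : Std.Symm fun x y : V => (x, y) ∈ X ∨ (y, x) ∈ X := ⟨fun _ _ h => h.symm⟩
  ⟨fun _ => .refl, fun h => Std.Symm.symm (r := Relation.ReflTransGen _) _ _ h, .trans⟩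

def connSetoid (X : Set (V × V)) : Setoid V := ⟨Conn X, conn_equivalence X⟩

/-- Unlike `ncomps`, this counts every vertex of `V` outside `verts X` as a component. -/
noncomputable def numComponents (X : Set (V × V)) : ℕ := Nat.card (Quotient (connSetoid X))

def component (X : Set (V × V)) (v : V) : Set V := {u | Conn X v u}

theorem component_eq_iff {X : Set (V × V)} {u v : V} :
    component X u = component X v ↔ Conn X u v := by
  refine ⟨fun h => ?_, fun h => Set.ext fun w => ?_⟩
  · have hv : v ∈ component X v := Relation.ReflTransGen.refl
    rwa [← h] at hv
  · exact ⟨((conn_equivalence X).symm h).trans, h.trans⟩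

theorem component_of_not_mem_verts {X : Set (V × V)} {v : V} (hv : v ∉ verts X) :
    component X v = {v} := by
  refine Set.ext fun u => ⟨fun hu => ?_, fun hu => hu ▸ .refl⟩
  rcases hu.cases_head with rfl | ⟨w, hvw, -⟩
  · rfl
  · exact (hv (hvw.elim (fun h => ⟨_, h, Or.inl rfl⟩) fun h => ⟨_, h, Or.inr rfl⟩)).elim

theorem ncard_range_component (X : Set (V × V)) :
    (Set.range (component X)).ncard = numComponents X := by
  rw [← Set.range_quotient_lift (s := connSetoid X) fun _ _ => component_eq_iff.2]
  exact Set.ncard_range_of_injective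
    (Quotient.ind₂ fun _ _ h => Quotient.sound (component_eq_iff.1 h))

theorem ncard_setOf_conn_eq_numComponents (X : Set (V × V)) :
    {S : Set V | ∃ v : V, S = {u | Conn X v u}}.ncard = numComponents X := by
  rw [← ncard_range_component]
  congr 1
  ext S
  simp only [Set.mem_ofPred_eq, Set.mem_range, component, eq_comm]

/-- The vertices outside `verts X` are singleton components, so `numComponents X` is
`ncomps X + |V \ verts X|`. -/
theorem rkArc_add_numComponents [Finite V] (X : Set (V × V)) :
    rkArc X + numComponents X = Nat.card V := by
  have hncomps : ncomps X = (component X '' verts X).ncard := by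
    unfold ncomps component
    congr 1
    ext S
    simp only [Set.mem_ofPred_eq, Set.mem_image, eq_comm]
  have hisolated : component X '' (verts X)ᶜ = (fun v => ({v} : Set V)) '' (verts X)ᶜ :=
    Set.image_congr fun v hv => component_of_not_mem_verts hv
  have hdisj : Disjoint (component X '' verts X) (component X '' (verts X)ᶜ) := by
    rw [hisolated, Set.disjoint_left]
    rintro S ⟨w, hw, rfl⟩ ⟨v, hv, hvw⟩
    have hw' : w ∈ component X w := Relation.ReflTransGen.refl
    rw [← hvw, Set.mem_singleton_iff] at hw'
    exact hv (hw' ▸ hw)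
  have hrange : (Set.range (component X)).ncard = ncomps X + (verts X)ᶜ.ncard := by
    rw [← Set.image_univ, ← Set.union_compl_self (verts X), Set.image_union,
      Set.ncard_union_eq hdisj, hncomps, hisolated,
      Set.ncard_image_of_injective _ Set.singleton_injective]
  have hle : ncomps X ≤ (verts X).ncard := hncomps ▸ Set.ncard_image_le
  rw [← ncard_range_component, hrange, ← Set.ncard_add_ncard_compl (verts X), rkArc]
  omega

theorem numComponents_anti [Finite V] {X Y : Set (V × V)} (h : X ⊆ Y) :
    numComponents Y ≤ numComponents X :=
  Nat.card_le_card_of_surjective (Quotient.map id fun _ _ => Conn.mono h)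
    (Quotient.ind fun a => ⟨⟦a⟧, rfl⟩)

theorem rkArc_sub_add_numComponents [Finite V] {X Y : Set (V × V)} (h : X ⊆ Y) :
    rkArc Y - rkArc X + numComponents Y = numComponents X := by
  have hX := rkArc_add_numComponents X
  have hY := rkArc_add_numComponents Y
  have := numComponents_anti h
  omega

theorem conn_imp_eq_of_forall_arc {α : Type*} {X : Set (V × V)} {f : V → α}
    (hf : ∀ a ∈ X, f a.1 = f a.2) {u v : V} (huv : Conn X u v) : f u = f v := by
  induction huv with
  | refl => rfl
  | tail _ hvw ih => exact hvw.elim (fun h => ih.trans (hf _ h)) fun h => ih.trans (hf _ h).symm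

def colouringEquiv (α : Type*) (X : Set (V × V)) :
    {f : V → α // ∀ a ∈ X, f a.1 = f a.2} ≃ (Quotient (connSetoid X) → α) where
  toFun f := Quotient.lift f.1 fun _ _ => conn_imp_eq_of_forall_arc f.2
  invFun g := ⟨fun v => g ⟦v⟧, fun _ ha => congrArg g (Quotient.sound (.single (Or.inl ha)))⟩
  left_inv _ := rfl
  right_inv _ := funext (Quotient.ind fun _ => rfl)

theorem card_colourings_const_on_arcs [Finite V] (α : Type*) (X : Set (V × V)) :
    Nat.card {f : V → α // ∀ a ∈ X, f a.1 = f a.2} = Nat.card α ^ numComponents X := by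
  rw [Nat.card_congr (colouringEquiv α X), Nat.card_fun, numComponents]

theorem pow_numComponents_eq_sum_colourings [Fintype V] [DecidableEq V] (B : Finset (V × V))
    (k : ℕ) :
    (k : ℤ) ^ numComponents (↑B : Set (V × V)) =
      ∑ f : V → Fin k, if ∀ a ∈ B, f a.1 = f a.2 then 1 else 0 := by
  have hcount := card_colourings_const_on_arcs (Fin k) (↑B : Set (V × V))
  simp only [mem_coe, Nat.card_fin] at hcount
  rw [sum_boole, ← Fintype.card_subtype, Fintype.card_eq_nat_card, hcount, Nat.cast_pow]

open Classical in
theorem coflow_nonneg {V : Type*} [Fintype V] [DecidableEq V]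
    (Arcs : Finset (V × V)) :
    ∃ N : ℕ, ∀ k : ℕ, N ≤ k →
      0 ≤ (∑ B ∈ Arcs.powerset.filter (fun B : Finset (V × V) => TotCyc (↑B : Set (V × V))),
            fmu (fun B : Finset (V × V) => TotCyc (↑B : Set (V × V))) B *
              (k : ℤ) ^ (rkArc (↑Arcs : Set (V × V)) - rkArc (↑B : Set (V × V)))) *
          (k : ℤ) ^ ({S : Set V | ∃ v : V, S = {u | Conn (↑Arcs : Set (V × V)) v u}}.ncard) := by
  refine ⟨0, fun k _ => ?_⟩
  set P := fun B : Finset (V × V) => TotCyc (↑B : Set (V × V))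
  have hP0 : P ∅ := by simpa only [P, coe_empty] using totCyc_empty
  have hPunion : ∀ B, P B → ∀ C, P C → P (B ∪ C) := fun B hB C hC => by
    simpa only [P, coe_union] using hB.union hC
  have hcolourings : ∀ B ∈ Arcs.powerset.filter P,
      (k : ℤ) ^ (rkArc (↑Arcs : Set (V × V)) - rkArc (↑B : Set (V × V))) *
          (k : ℤ) ^ numComponents (↑Arcs : Set (V × V)) =
        ∑ f : V → Fin k, if ∀ a ∈ B, f a.1 = f a.2 then 1 else 0 := fun B hB => by
    rw [← pow_add, rkArc_sub_add_numComponents (coe_subset.2 (mem_powerset.1 (mem_filter.1 hB).1)),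
      pow_numComponents_eq_sum_colourings]
  rw [ncard_setOf_conn_eq_numComponents, sum_mul]
  simp_rw [mul_assoc]
  rw [sum_congr rfl fun B hB => by rw [hcolourings B hB, mul_sum], sum_comm]
  refine sum_nonneg fun f _ => ?_
  simp_rw [mul_ite, mul_one, mul_zero]
  rw [← sum_filter, filter_forall_mem_powerset_filter]
  exact sum_fmu_powerset_filter_nonneg hP0 hPunion _

end NL
end

section
/- Let M be an oriented matroid on a finite ground set E with nonnegative covector lattice L₊ (covectors with no negative entries, ordered componentwise with 0 < +) and Möbius function μ. Define φ(x) = Σ_{X ∈ L₊} μ(∅, X) x^{rk*(M \ supp(X))}, where rk*(N) = |ground set of N| − rk(N). If M is the graphic oriented matroid of a digraph D, then φ coincides with the NL-flow polynomial of D defined via directed cuts: φ(x) = Σ_{C ∈ 𝒞} μ_{𝒞}(A, A \ C) x^{|A \ C| − rk(A \ C)}, where 𝒞 is the poset of complements of unions of directed cuts of D ordered by reverse inclusion. -/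
/-! Complementation `X ↦ A \ X` inside the arc set `A` is an order-reversing bijection from the
unions of directed cuts (ordered by inclusion) onto their complements (ordered by reverse
inclusion). It therefore carries `μ(∅, X)` to `μ_𝒞(A, A \ X)`, and the exponent of the term of
`X` to that of the term of `A \ X`, so the two sums agree term by term. -/
open Finset
namespace NL
variable {γ : Type*} [DecidableEq γ]

variable {V : Type*}

-- The Möbius function `μ(A, Y)` of the subposet of `Finset γ` selected by `P`
-- (a family of subsets of `Arcs` containing `Arcs` as its top element),
-- ordered by *reverse* inclusion.
open Classical in
noncomputable def fmuRev (Arcs : Finset γ) (P : Finset γ → Prop) : Finset γ → ℤ := fun Y =>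
  if Y = Arcs then 1
  else - ∑ Z ∈ (Arcs.powerset.filter (fun Z => Y ⊆ Z ∧ Z ≠ Y ∧ P Z)).attach,
          fmuRev Arcs P Z.1
termination_by Y => (Arcs \ Y).card
decreasing_by
  have hZ := Z.2
  rw [Finset.mem_filter, Finset.mem_powerset] at hZ
  have h1 := Finset.card_lt_card (lt_of_le_of_ne hZ.2.1 (Ne.symm hZ.2.2.1))
  have h2 := Finset.card_le_card hZ.1
  rw [Finset.card_sdiff, Finset.card_sdiff, Finset.inter_eq_left.mpr hZ.1,
    Finset.inter_eq_left.mpr (hZ.2.1.trans hZ.1)]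
  omega

variable {V : Type*}

/-- A directed cut of the digraph with arc set `Arcs`: the nonempty set of arcs
leaving a vertex set `S` which no arc enters. -/
def IsDirCut [DecidableEq V] (Arcs : Finset (V × V)) (C : Finset (V × V)) : Prop :=
  ∃ S : Finset V, C = Arcs.filter (fun a => a.1 ∈ S ∧ a.2 ∉ S) ∧
    Arcs.filter (fun a => a.1 ∉ S ∧ a.2 ∈ S) = ∅ ∧ C ≠ ∅

/-- A union of directed cuts (these are exactly the supports of the nonnegative
covectors of the graphic oriented matroid). -/
def UnionDirCuts [DecidableEq V] (Arcs : Finset (V × V)) (X : Finset (V × V)) : Prop :=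
  ∃ 𝒮 : Finset (Finset (V × V)), (∀ C ∈ 𝒮, IsDirCut Arcs C) ∧ X = 𝒮.sup id

theorem sum_filter_powerset_sdiff {β : Type*} [AddCommMonoid β] (A : Finset γ)
    (P : Finset γ → Prop) [DecidablePred P] (f : Finset γ → β) :
    ∑ X ∈ A.powerset.filter P, f X = ∑ Y ∈ A.powerset.filter (fun Y => P (A \ Y)), f (A \ Y) := by
  refine Finset.sum_nbij' (A \ ·) (A \ ·) ?_ ?_ ?_ ?_ ?_
  · intro X hX
    rw [mem_filter, mem_powerset] at hX ⊢
    exact ⟨sdiff_subset, by rw [Finset.sdiff_sdiff_eq_self hX.1]; exact hX.2⟩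
  · intro Y hY
    rw [mem_filter, mem_powerset] at hY ⊢
    exact ⟨sdiff_subset, hY.2⟩
  · intro X hX
    exact Finset.sdiff_sdiff_eq_self (mem_powerset.mp (mem_filter.mp hX).1)
  · intro Y hY
    exact Finset.sdiff_sdiff_eq_self (mem_powerset.mp (mem_filter.mp hY).1)
  · intro X hX
    rw [Finset.sdiff_sdiff_eq_self (mem_powerset.mp (mem_filter.mp hX).1)]

open Classical in
theorem fmu_eq_fmuRev_sdiff (P : Finset γ → Prop) {A X : Finset γ} (hX : X ⊆ A) :
    fmu P X = fmuRev A (fun Z => P (A \ Z)) (A \ X) := by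
  induction X using Finset.strongInduction with
  | H X ih =>
  rw [fmu, fmuRev]
  by_cases hX0 : X = ∅
  · simp [hX0]
  have hAX : A \ X ≠ A := fun h =>
    hX0 ((Finset.sdiff_eq_self_iff_disjoint.mp h).eq_bot_of_ge hX)
  rw [if_neg hX0, if_neg hAX, sum_attach _ (fmu P), sum_attach _ (fmuRev A _)]
  congr 1
  set Q : Finset γ → Prop := fun Z => P (A \ Z)
  have h_filter : X.powerset.filter (fun C => C ≠ X ∧ P C) =
      A.powerset.filter (fun C => C ⊆ X ∧ C ≠ X ∧ P C) := by
    ext C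
    simp only [mem_filter, mem_powerset]
    exact ⟨fun h => ⟨h.1.trans hX, h⟩, fun h => h.2⟩
  calc ∑ C ∈ X.powerset.filter (fun C => C ≠ X ∧ P C), fmu P C
      = ∑ C ∈ A.powerset.filter (fun C => C ⊆ X ∧ C ≠ X ∧ P C), fmuRev A Q (A \ C) := by
        rw [h_filter]
        refine sum_congr rfl fun C hC => ?_
        simp only [mem_filter, mem_powerset] at hC
        exact ih C (ssubset_of_subset_of_ne hC.2.1 hC.2.2.1) hC.1
    _ = ∑ Z ∈ A.powerset.filter (fun Z => A \ Z ⊆ X ∧ A \ Z ≠ X ∧ P (A \ Z)),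
          fmuRev A Q (A \ (A \ Z)) := sum_filter_powerset_sdiff A _ _
    _ = ∑ Z ∈ A.powerset.filter (fun Z => A \ X ⊆ Z ∧ Z ≠ A \ X ∧ Q Z), fmuRev A Q Z := by
        refine sum_congr (filter_congr fun Z hZ => ?_) fun Z hZ => ?_
        · rw [mem_powerset] at hZ
          rw [sdiff_le_comm, Ne, Ne, sdiff_eq_comm hZ hX, eq_comm (a := A \ X)]
        · rw [Finset.sdiff_sdiff_eq_self (mem_powerset.mp (mem_filter.mp hZ).1)]

open Classical in
theorem flow_polynomial_graphic_general {V : Type*} [DecidableEq V]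
    (Arcs : Finset (V × V)) :
    ∀ k : ℤ,
      (∑ X ∈ Arcs.powerset.filter (UnionDirCuts Arcs),
        fmu (UnionDirCuts Arcs) X *
          k ^ ((Arcs \ X).card - rkArc (↑(Arcs \ X) : Set (V × V)))) =
      ∑ Y ∈ Arcs.powerset.filter (fun Y : Finset (V × V) => UnionDirCuts Arcs (Arcs \ Y)),
        fmuRev Arcs (fun Z : Finset (V × V) => UnionDirCuts Arcs (Arcs \ Z)) Y *
          k ^ (Y.card - rkArc (↑Y : Set (V × V))) := by
  intro k
  rw [sum_filter_powerset_sdiff]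
  refine sum_congr rfl fun Y hY => ?_
  have hYA : Y ⊆ Arcs := mem_powerset.mp (mem_filter.mp hY).1
  rw [fmu_eq_fmuRev_sdiff _ sdiff_subset, Finset.sdiff_sdiff_eq_self hYA]

open Classical in
theorem flow_polynomial_graphic {V : Type*} [Fintype V] [DecidableEq V]
    (Arcs : Finset (V × V)) :
    ∀ k : ℤ,
      (∑ X ∈ Arcs.powerset.filter (UnionDirCuts Arcs),
        fmu (UnionDirCuts Arcs) X *
          k ^ ((Arcs \ X).card - rkArc (↑(Arcs \ X) : Set (V × V)))) =
      ∑ Y ∈ Arcs.powerset.filter (fun Y : Finset (V × V) => UnionDirCuts Arcs (Arcs \ Y)),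
        fmuRev Arcs (fun Z : Finset (V × V) => UnionDirCuts Arcs (Arcs \ Z)) Y *
          k ^ (Y.card - rkArc (↑Y : Set (V × V))) :=
  flow_polynomial_graphic_general Arcs

end NL
end
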